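/- For any tree T of order n, diam(T) ≤ n − b(T) − 1, where b(T) is the number of vertices of T of degree at least 3. -/

import Mathlib

open SimpleGraph Finset
open scoped Classical

noncomputable section

/-- Eccentricity of a vertex. -/
def gecc {V : Type*} (G : SimpleGraph V) [Fintype V] (v : V) : ℕ :=
  Finset.univ.sup fun u => G.dist v u

/-- A broadcast: `f v ≤ e(v)` for all `v`. -/
def IsBroadcast {V : Type*} (G : SimpleGraph V) [Fintype V] (f : V → ℕ) : Prop :=
  ∀ v, f v ≤ gecc G v

/-- `u` hears `f` from `v`. -/
def Hears {V : Type*} (G : SimpleGraph V) (f : V → ℕ) (u v : V) : Prop :=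
  0 < f v ∧ G.dist u v ≤ f v

/-- Boundary independent broadcast: a vertex hearing two or more broadcasting
vertices lies in the boundary of each. -/
def BnIndep {V : Type*} (G : SimpleGraph V) [Fintype V] (f : V → ℕ) : Prop :=
  IsBroadcast G f ∧
    ∀ w v₁ v₂, v₁ ≠ v₂ → Hears G f w v₁ → Hears G f w v₂ → G.dist w v₁ = f v₁

/-- Weight of a broadcast. -/
def bweight {V : Type*} [Fintype V] (f : V → ℕ) : ℕ := ∑ v, f v

/-- The boundary independence number. -/
def alphaBn {V : Type*} (G : SimpleGraph V) [Fintype V] : ℕ :=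
  sSup {w | ∃ f, BnIndep G f ∧ bweight f = w}

/-- Set of branch vertices (degree at least 3). -/
def branchSet {V : Type*} (G : SimpleGraph V) [Fintype V] : Finset V :=
  Finset.univ.filter fun v => 3 ≤ G.degree v

/-- `l` is a leaf joined to `v` by an endpath (all internal vertices of degree 2). -/
def IsEndpathTo {V : Type*} (G : SimpleGraph V) [Fintype V] (v l : V) : Prop :=
  G.degree l = 1 ∧ ∃ p : G.Walk v l, p.IsPath ∧
    ∀ u ∈ p.support, u ≠ v → u ≠ l → G.degree u = 2

/-- Leaf set `L(v)` of a vertex `v`. -/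
def leafSet {V : Type*} (G : SimpleGraph V) [Fintype V] (v : V) : Finset V :=
  Finset.univ.filter fun l => IsEndpathTo G v l

/-- `R(T)`: branch vertices with at most one leaf in their leaf set. -/
def rset {V : Type*} (G : SimpleGraph V) [Fintype V] : Finset V :=
  (branchSet G).filter fun v => (leafSet G v).card ≤ 1

/-- Edge `uv` is covered by broadcasting vertex `x`. -/
def Covers {V : Type*} (G : SimpleGraph V) (f : V → ℕ) (x u v : V) : Prop :=
  0 < f x ∧ G.Adj u v ∧ G.dist u x ≤ f x ∧ G.dist v x ≤ f x ∧
    (G.dist u x < f x ∨ G.dist v x < f x)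

/-- The graph `G - U_f^E` obtained by deleting all `f`-uncovered edges. -/
def coveredSubgraph {V : Type*} (G : SimpleGraph V) (f : V → ℕ) : SimpleGraph V where
  Adj u v := G.Adj u v ∧ ∃ x, Covers G f x u v
  symm := by
    constructor
    rintro u v ⟨h, x, h1, h2, h3, h4, h5⟩
    exact ⟨h.symm, x, h1, h2.symm, h4, h3, h5.symm⟩
  loopless := by constructor; rintro u ⟨h, -⟩; exact G.irrefl h

/-- `f` is a maximal bn-independent broadcast. -/
def MaximalBn {V : Type*} (G : SimpleGraph V) [Fintype V] (f : V → ℕ) : Prop :=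
  BnIndep G f ∧ ∀ g, BnIndep G g → (∀ v, f v ≤ g v) → g = f

/-- The `f`-private boundary of `v`: vertices of `N_f(v)` not dominated once the
broadcast strength of `v` is lowered by one. -/
def privBoundary {V : Type*} (G : SimpleGraph V) (f : V → ℕ) (v : V) : Set V :=
  {u | G.dist u v ≤ f v ∧ ∀ x, ¬ Hears G (Function.update f v (f v - 1)) u x}

/-- The branch representation: branch vertices adjacent iff the path between them
contains no other branch vertex. -/
def branchRep {V : Type*} (G : SimpleGraph V) [Fintype V] : SimpleGraph V where
  Adj b₁ b₂ := b₁ ≠ b₂ ∧ 3 ≤ G.degree b₁ ∧ 3 ≤ G.degree b₂ ∧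
    ∀ p : G.Walk b₁ b₂, p.IsPath → ∀ u ∈ p.support, 3 ≤ G.degree u → u = b₁ ∨ u = b₂
  symm := by
    constructor
    rintro a b ⟨hab, ha, hb, h⟩
    refine ⟨hab.symm, hb, ha, fun p hp u hu hdeg => ?_⟩
    have hu' : u ∈ p.reverse.support := by
      rw [SimpleGraph.Walk.support_reverse]; exact List.mem_reverse.mpr hu
    exact (h p.reverse hp.reverse u hu' hdeg).symm
  loopless := by constructor; rintro v ⟨h, -⟩; exact h rfl

/-- Hearing independent broadcast. -/
def HIndep {V : Type*} (G : SimpleGraph V) [Fintype V] (f : V → ℕ) : Prop :=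
  IsBroadcast G f ∧ ∀ u v, u ≠ v → 0 < f u → 0 < f v → f v < G.dist u v

/-- The hearing independence number. -/
def alphaH {V : Type*} (G : SimpleGraph V) [Fintype V] : ℕ :=
  sSup {w | ∃ f, HIndep G f ∧ bweight f = w}

/-- Diameter. -/
def gdiam {V : Type*} (G : SimpleGraph V) [Fintype V] : ℕ :=
  Finset.univ.sup fun v => gecc G v

/-! A shortest path between two vertices at distance `d` has `d + 1` vertices, and its interior
vertices have degree at least 2, so at most two leaves lie on it: `#leaves ≤ n - d + 1`.
In a tree the handshake identity reads `∑ v, (deg v - 2) = -2`; for `n ≥ 2` every vertex has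
degree at least 1, so leaves contribute `-1`, branch vertices at least `1` and the rest `0`, whence
`#leaves ≥ b + 2`. -/

namespace SimpleGraph

variable {V : Type*} {G : SimpleGraph V}

lemma Walk.IsPath.two_le_degree_of_mem_support {u v x : V} [Fintype (G.neighborSet x)]
    {p : G.Walk u v} (hp : p.IsPath) (hx : x ∈ p.support) (hxu : x ≠ u) (hxv : x ≠ v) :
    2 ≤ G.degree x := by
  obtain ⟨i, rfl, hi⟩ := Walk.mem_support_iff_exists_getVert.1 hx
  have hi0 : i ≠ 0 := by rintro rfl; exact hxu p.getVert_zero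
  have hil : i ≠ p.length := by rintro rfl; exact hxv p.getVert_length
  have hprev : G.Adj (p.getVert i) (p.getVert (i - 1)) := by
    simpa [Nat.sub_add_cancel (Nat.pos_of_ne_zero hi0)] using
      (p.adj_getVert_succ (i := i - 1) (by omega)).symm
  have hnext : G.Adj (p.getVert i) (p.getVert (i + 1)) := p.adj_getVert_succ (by omega)
  have hne : p.getVert (i - 1) ≠ p.getVert (i + 1) := fun h => by
    have := hp.getVert_injOn (by simp only [Set.mem_ofPred_eq]; omega)
      (by simp only [Set.mem_ofPred_eq]; omega) h
    omega
  rw [← card_neighborFinset_eq_degree]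
  exact Finset.one_lt_card.2
    ⟨_, (mem_neighborFinset _ _ _).2 hprev, _, (mem_neighborFinset _ _ _).2 hnext, hne⟩

variable [Fintype V]

def leaves (G : SimpleGraph V) : Finset V :=
  univ.filter fun v => G.degree v = 1

lemma Walk.IsPath.card_leaves_add_length_le {u v : V} {p : G.Walk u v} (hp : p.IsPath) :
    #G.leaves + p.length ≤ Fintype.card V + 1 := by
  have hsub : G.leaves ⊆ (univ \ p.support.toFinset) ∪ {u, v} := by
    intro x hx
    have hdeg : G.degree x = 1 := (Finset.mem_filter.1 hx).2
    by_contra hout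
    simp only [Finset.mem_union, Finset.mem_sdiff, Finset.mem_univ, true_and, List.mem_toFinset,
      Finset.mem_insert, Finset.mem_singleton, not_or, not_not] at hout
    have := hp.two_le_degree_of_mem_support hout.1 hout.2.1 hout.2.2
    omega
  have hsupp : #p.support.toFinset = p.length + 1 := by
    rw [List.toFinset_card_of_nodup hp.support_nodup, Walk.length_support]
  have hlen : p.length + 1 ≤ Fintype.card V := hsupp ▸ Finset.card_le_univ _
  have hleaves := (Finset.card_le_card hsub).trans (Finset.card_union_le _ _)
  rw [Finset.card_univ_sdiff, hsupp] at hleaves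
  have := Finset.card_le_two (a := u) (b := v)
  omega

lemma IsTree.card_branchSet_add_two_le_card_leaves [Nontrivial V] (hG : G.IsTree) :
    #(branchSet G) + 2 ≤ #G.leaves := by
  have hpos (v : V) : 0 < G.degree v := hG.connected.preconnected.degree_pos_of_nontrivial v
  have hsum : ∑ v, ((G.degree v : ℤ) - 2) = -2 := by
    have := hG.card_edgeFinset
    rw [Finset.sum_sub_distrib, ← Nat.cast_sum, sum_degrees_eq_twice_card_edges]
    simp only [Finset.sum_const, Finset.card_univ, nsmul_eq_mul]
    push_cast [← this]
    ring
  have hle : ∑ v, ((if 3 ≤ G.degree v then 1 else 0) - (if G.degree v = 1 then 1 else 0) : ℤ)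
      ≤ ∑ v, ((G.degree v : ℤ) - 2) := by
    refine Finset.sum_le_sum fun v _ => ?_
    have := hpos v
    split_ifs <;> omega
  rw [Finset.sum_sub_distrib, Finset.sum_boole, Finset.sum_boole, hsum] at hle
  simp only [branchSet, leaves]
  omega

lemma IsTree.dist_le_card_sub_card_branchSet (hG : G.IsTree) (u v : V) :
    G.dist u v ≤ Fintype.card V - #(branchSet G) - 1 := by
  rcases eq_or_ne u v with rfl | huv
  · simp
  have : Nontrivial V := ⟨⟨u, v, huv⟩⟩
  obtain ⟨p, hp, hpdist⟩ := hG.connected.exists_path_of_dist u v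
  have := hp.card_leaves_add_length_le
  have := hG.card_branchSet_add_two_le_card_leaves
  omega

end SimpleGraph

/-- For any tree `T` of order `n`, `diam(T) ≤ n - b(T) - 1`. -/
theorem stmt5 {V : Type*} [Fintype V] (T : SimpleGraph V) (hT : T.IsTree) :
    gdiam T ≤ Fintype.card V - (branchSet T).card - 1 :=
  Finset.sup_le fun u _ => Finset.sup_le fun v _ => hT.dist_le_card_sub_card_branchSet u v
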